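/- Apéry limit for Franel numbers (s = 3): let A(n) = ∑_{k=0}^n binom(n,k)^3 and let B(n) be the coefficient of t² in ∑_{k=0}^n binom(n,k)^3 [∏_{j=1}^k (1 - t/j) ∏_{j=1}^{n-k}(1 + t/j)]^{-3}, normalized so B(1) = 1 (i.e., divide by 12). Then lim_{n→∞} B(n)/A(n) = ζ(2)/4 = π²/24. -/

import Mathlib

/-!
Writing the `k`-th summand of `A^{(3)}(n, t)` as `binom(n,k)³ ∏ᵢ (1 + cᵢ t)⁻³` with `cᵢ = ∓1/j`,
its second derivative at `0` is `binom(n,k)³ Q(k, n-k)` with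
`Q(a, b) = 9 (H_b - H_a)² + 3 (H⁽²⁾_a + H⁽²⁾_b)`, so `24 B(n) / A(n)` is the average of `Q(k, n-k)`
for the weights `binom(n,k)³`. These weights concentrate in the window `|n - 2k| ≤ 2 n^{3/4}`,
since `binom(n,k) ≤ binom(n,⌊n/2⌋) exp(-((n-2k)² - 1)/(4n))`; inside it
`Q(k, n-k) = 6 ζ(2) + O(n^{-1/2}) = π² + O(n^{-1/2})`, and outside it the weight is
exponentially small while `Q` is only polynomially large.
-/

open Real Filter

noncomputable def franelA3 (n : ℕ) (t : ℝ) : ℝ :=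
  ∑ k ∈ Finset.range (n + 1), (n.choose k : ℝ) ^ 3 *
    (((∏ j ∈ Finset.Icc 1 k, (1 - t / (j : ℝ))) *
      ∏ j ∈ Finset.Icc 1 (n - k), (1 + t / (j : ℝ)))⁻¹) ^ 3

/-- `B(n)`: the `t²`-coefficient of `A^{(3)}(n,t)`, normalised so that `B(1) = 1`. -/
noncomputable def franelB (n : ℕ) : ℝ :=
  (iteratedDeriv 2 (fun t => franelA3 n t) 0 / 2) / 12

open Finset Topology

def HasSecondDerivAt (f : ℝ → ℝ) (f'' x : ℝ) : Prop :=
  ∃ f' : ℝ → ℝ, (∀ᶠ y in 𝓝 x, HasDerivAt f (f' y) y) ∧ HasDerivAt f' f'' x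

namespace HasSecondDerivAt

variable {f : ℝ → ℝ} {f'' x : ℝ}

theorem iteratedDeriv_two_eq (h : HasSecondDerivAt f f'' x) : iteratedDeriv 2 f x = f'' := by
  obtain ⟨f', hf, hf'⟩ := h
  have hderiv : deriv f =ᶠ[𝓝 x] f' := hf.mono fun y hy => hy.deriv
  rw [iteratedDeriv_succ, iteratedDeriv_one, hderiv.deriv_eq, hf'.deriv]

theorem const_mul (h : HasSecondDerivAt f f'' x) (c : ℝ) :
    HasSecondDerivAt (fun y => c * f y) (c * f'') x := by
  obtain ⟨f', hf, hf'⟩ := h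
  exact ⟨fun y => c * f' y, hf.mono fun y hy => hy.const_mul c, hf'.const_mul c⟩

theorem add {g : ℝ → ℝ} {g'' : ℝ} (hf : HasSecondDerivAt f f'' x)
    (hg : HasSecondDerivAt g g'' x) : HasSecondDerivAt (fun y => f y + g y) (f'' + g'') x := by
  obtain ⟨f', hf, hf'⟩ := hf
  obtain ⟨g', hg, hg'⟩ := hg
  exact ⟨fun y => f' y + g' y, hf.and hg |>.mono fun y hy => hy.1.add hy.2, hf'.add hg'⟩

theorem sum {ι : Type*} {s : Finset ι} {f : ι → ℝ → ℝ} {f'' : ι → ℝ}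
    (h : ∀ i ∈ s, HasSecondDerivAt (f i) (f'' i) x) :
    HasSecondDerivAt (fun y => ∑ i ∈ s, f i y) (∑ i ∈ s, f'' i) x := by
  classical
  induction s using Finset.induction_on with
  | empty => exact ⟨fun _ => 0, .of_forall fun y => by simpa using hasDerivAt_const y 0,
      by simpa using hasDerivAt_const x 0⟩
  | insert i s hi ih =>
    simp_rw [sum_insert hi]
    exact (h i (mem_insert_self i s)).add (ih fun j hj => h j (mem_insert_of_mem hj))

end HasSecondDerivAt

theorem hasSecondDerivAt_zpow {P P' : ℝ → ℝ} {x b : ℝ} (m : ℤ)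
    (hP : ∀ᶠ y in 𝓝 x, HasDerivAt P (P' y) y) (hP' : HasDerivAt P' b x) (hx : P x = 1) :
    HasSecondDerivAt (fun y => P y ^ m) (m * (m - 1) * P' x ^ 2 + m * b) x := by
  have hx0 : P x ≠ 0 := by rw [hx]; exact one_ne_zero
  have hne : ∀ᶠ y in 𝓝 x, P y ≠ 0 := hP.self_of_nhds.continuousAt.eventually_ne hx0
  refine ⟨fun y => m * P y ^ (m - 1) * P' y, ?_, ?_⟩
  · filter_upwards [hP, hne] with y hy hy0
    exact (hasDerivAt_zpow m (P y) (.inl hy0)).comp y hy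
  · have hpow := (hasDerivAt_zpow (m - 1) (P x) (.inl hx0)).comp x hP.self_of_nhds
    refine ((hpow.const_mul (m : ℝ)).mul hP').congr_deriv ?_
    simp only [Function.comp_apply, hx, one_zpow]
    push_cast
    ring

section ProdOneAddMul

variable {ι : Type*} (s : Finset ι) (c : ι → ℝ)

theorem hasDerivAt_prod_one_add_mul [DecidableEq ι] (y : ℝ) :
    HasDerivAt (fun y => ∏ i ∈ s, (1 + c i * y))
      (∑ i ∈ s, c i * ∏ j ∈ s.erase i, (1 + c j * y)) y := by
  refine (HasDerivAt.fun_finsetProd fun i _ => ((hasDerivAt_id y).const_mul (c i)).const_add 1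
    ).congr_deriv (sum_congr rfl fun i _ => ?_)
  simp [mul_comm]

theorem hasSecondDerivAt_prod_one_add_mul_zpow (m : ℤ) :
    HasSecondDerivAt (fun y => (∏ i ∈ s, (1 + c i * y)) ^ m)
      (m ^ 2 * (∑ i ∈ s, c i) ^ 2 - m * ∑ i ∈ s, c i ^ 2) 0 := by
  classical
  have hP'' : HasDerivAt (fun y => ∑ i ∈ s, c i * ∏ j ∈ s.erase i, (1 + c j * y))
      ((∑ i ∈ s, c i) ^ 2 - ∑ i ∈ s, c i ^ 2) 0 := by
    refine (HasDerivAt.fun_sum fun i _ =>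
      (hasDerivAt_prod_one_add_mul (s.erase i) c 0).const_mul (c i)).congr_deriv ?_
    have hsplit : ∀ i ∈ s, c i * ∑ j ∈ s.erase i, c j = c i * ∑ j ∈ s, c j - c i ^ 2 :=
      fun i hi => by rw [← add_sum_erase s c hi]; ring
    simp only [mul_zero, add_zero, prod_const_one, mul_one]
    rw [sum_congr rfl hsplit, sum_sub_distrib, ← sum_mul, sq]
  convert hasSecondDerivAt_zpow m (.of_forall (hasDerivAt_prod_one_add_mul s c)) hP''
    (by simp) using 1
  simp only [mul_zero, add_zero, prod_const_one, mul_one]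
  ring

end ProdOneAddMul

theorem harmonic_add_sub_harmonic_mem_Icc (a d : ℕ) :
    (harmonic (a + d) : ℝ) - harmonic a ∈ Set.Icc 0 ((d : ℝ) / (a + 1)) := by
  induction d with
  | zero => simp
  | succ d ih =>
    have hterm : ((a : ℝ) + d + 1)⁻¹ ≤ ((a : ℝ) + 1)⁻¹ := by gcongr; simp
    have hpos : 0 ≤ ((a : ℝ) + d + 1)⁻¹ := by positivity
    rw [← add_assoc, harmonic_succ]
    push_cast at ih ⊢
    constructor
    · linarith [ih.1]
    · rw [add_div, div_eq_mul_inv 1]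
      linarith [ih.2]

theorem abs_harmonic_sub_harmonic_le (a b : ℕ) :
    |(harmonic a : ℝ) - harmonic b| ≤ |(a : ℝ) - b| / ((min a b : ℕ) + 1) := by
  wlog hab : a ≤ b generalizing a b
  · rw [abs_sub_comm, abs_sub_comm (a : ℝ), min_comm]
    exact this b a (le_of_not_ge hab)
  obtain ⟨d, rfl⟩ := Nat.exists_eq_add_of_le hab
  have h := harmonic_add_sub_harmonic_mem_Icc a d
  rw [abs_sub_comm, abs_of_nonneg h.1, min_eq_left hab, abs_sub_comm]
  push_cast
  simpa using h.2

noncomputable def harmonicSq (n : ℕ) : ℝ := ∑ i ∈ Icc 1 n, ((i : ℝ) ^ 2)⁻¹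

theorem harmonicSq_add_sum_Ioc {n N : ℕ} (h : n ≤ N) :
    harmonicSq n + ∑ i ∈ Ioc n N, ((i : ℝ) ^ 2)⁻¹ = harmonicSq N := by
  have hIcc : ∀ m : ℕ, Icc 1 m = Ioc 0 m := Icc_add_one_left_eq_Ioc 0
  simp only [harmonicSq, hIcc]
  exact sum_Ioc_consecutive _ n.zero_le h

theorem tendsto_harmonicSq : Tendsto harmonicSq atTop (𝓝 (π ^ 2 / 6)) := by
  refine (hasSum_zeta_two.tendsto_sum_nat.comp (tendsto_add_atTop_nat 1)).congr fun n => ?_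
  rw [Function.comp_apply, range_eq_Ico, sum_eq_sum_Ico_succ_bot n.succ_pos, Nat.succ_eq_add_one,
    Ico_add_one_right_eq_Icc]
  simp [harmonicSq]

theorem abs_harmonicSq_sub_le (n : ℕ) : |harmonicSq n - π ^ 2 / 6| ≤ 2 / ((n : ℝ) + 1) := by
  refine le_of_tendsto ((tendsto_harmonicSq.const_sub (harmonicSq n)).abs)
    (eventually_atTop.2 ⟨n, fun N hN => ?_⟩)
  have htail := sum_Ioo_inv_sq_le (α := ℝ) n (N + 1)
  rw [Ioo_add_one_right_eq_Ioc] at htail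
  rw [← harmonicSq_add_sum_Ioc hN, sub_add_cancel_left, abs_neg,
    abs_of_nonneg (sum_nonneg fun i _ => by positivity)]
  exact htail

/-- The second derivative at `0` of `(∏_{j ≤ a} (1 - t/j) ∏_{j ≤ b} (1 + t/j))⁻³`. -/
noncomputable def franelQ (a b : ℕ) : ℝ :=
  9 * ((harmonic b : ℝ) - harmonic a) ^ 2 + 3 * (harmonicSq a + harmonicSq b)

theorem abs_franelQ_sub_pi_sq_le (a b : ℕ) :
    |franelQ a b - π ^ 2| ≤
      9 * (|(a : ℝ) - b| / ((min a b : ℕ) + 1)) ^ 2 + 12 / (((min a b : ℕ) : ℝ) + 1) := by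
  have hsq : ((harmonic b : ℝ) - harmonic a) ^ 2 ≤ (|(a : ℝ) - b| / ((min a b : ℕ) + 1)) ^ 2 := by
    rw [← sq_abs, abs_sub_comm]
    exact pow_le_pow_left₀ (abs_nonneg _) (abs_harmonic_sub_harmonic_le a b) 2
  have hzeta : ∀ c : ℕ, min a b ≤ c →
      |harmonicSq c - π ^ 2 / 6| ≤ 2 / (((min a b : ℕ) : ℝ) + 1) :=
    fun c hc => (abs_harmonicSq_sub_le c).trans (by gcongr)
  obtain ⟨ha, ha'⟩ := abs_le.mp (hzeta a (min_le_left a b))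
  obtain ⟨hb, hb'⟩ := abs_le.mp (hzeta b (min_le_right a b))
  have h12 : 12 / (((min a b : ℕ) : ℝ) + 1) = 6 * (2 / (((min a b : ℕ) : ℝ) + 1)) := by ring
  rw [abs_le, franelQ]
  constructor <;> nlinarith [sq_nonneg ((harmonic b : ℝ) - harmonic a)]

theorem hasSecondDerivAt_prod_Icc_zpow (a b : ℕ) (m : ℤ) :
    HasSecondDerivAt
      (fun t => ((∏ j ∈ Icc 1 a, (1 - t / (j : ℝ))) * ∏ j ∈ Icc 1 b, (1 + t / (j : ℝ))) ^ m)
      (m ^ 2 * ((harmonic b : ℝ) - harmonic a) ^ 2 - m * (harmonicSq a + harmonicSq b)) 0 := by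
  let c : ℕ ⊕ ℕ → ℝ := Sum.elim (fun j => -(j : ℝ)⁻¹) fun j => (j : ℝ)⁻¹
  have h := hasSecondDerivAt_prod_one_add_mul_zpow ((Icc 1 a).disjSum (Icc 1 b)) c m
  simp only [prod_disjSum, sum_disjSum, c, Sum.elim_inl, Sum.elim_inr, sum_neg_distrib,
    neg_sq, inv_pow, neg_mul, ← sub_eq_add_neg] at h
  convert h using 2
  · simp [div_eq_inv_mul]
  · simp [harmonic_eq_sum_Icc, neg_add_eq_sub]
  · simp [harmonicSq]

theorem hasSecondDerivAt_franelA3 (n : ℕ) :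
    HasSecondDerivAt (franelA3 n) (∑ k ∈ range (n + 1), (n.choose k : ℝ) ^ 3 * franelQ k (n - k))
      0 := by
  refine HasSecondDerivAt.sum fun k _ => ?_
  convert (hasSecondDerivAt_prod_Icc_zpow k (n - k) (-3)).const_mul ((n.choose k : ℝ) ^ 3)
    using 2
  · rw [zpow_neg, inv_pow]
    rfl
  · simp only [franelQ]
    push_cast
    ring

theorem choose_le_choose_succ_mul_exp {n k : ℕ} (hk : 2 * k + 1 ≤ n) :
    (n.choose k : ℝ) ≤ n.choose (k + 1) * exp (-((n : ℝ) - 2 * k - 1) / n) := by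
  have hkR : 2 * (k : ℝ) + 1 ≤ n := by exact_mod_cast hk
  have hn : (0 : ℝ) < n := by linarith [k.cast_nonneg (α := ℝ)]
  have hrel : (n.choose k : ℝ) * (n - k) = n.choose (k + 1) * (k + 1) := by
    have h := Nat.choose_succ_right_eq n k
    rw [← Nat.cast_inj (R := ℝ)] at h
    push_cast [Nat.cast_sub (by omega : k ≤ n)] at h
    exact h.symm
  have hexp : (2 * (k : ℝ) + 1) / n ≤ exp (-((n : ℝ) - 2 * k - 1) / n) :=
    calc (2 * (k : ℝ) + 1) / n = -((n : ℝ) - 2 * k - 1) / n + 1 := by field_simp; ring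
      _ ≤ _ := add_one_le_exp _
  have hratio : (k : ℝ) + 1 ≤ (2 * k + 1) / n * (n - k) := by
    rw [div_mul_eq_mul_div, le_div_iff₀ hn]
    nlinarith [k.cast_nonneg (α := ℝ)]
  refine le_of_mul_le_mul_right ?_ (by linarith : (0 : ℝ) < n - k)
  calc (n.choose k : ℝ) * (n - k) = n.choose (k + 1) * (k + 1) := hrel
    _ ≤ n.choose (k + 1) * ((2 * k + 1) / n * (n - k)) := by gcongr
    _ ≤ n.choose (k + 1) * (exp (-((n : ℝ) - 2 * k - 1) / n) * (n - k)) := by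
      gcongr
      linarith
    _ = _ := by ring

theorem choose_le_choose_half_mul_exp_of_le {n k : ℕ} (hk : k ≤ n / 2) :
    (n.choose k : ℝ) ≤
      n.choose (n / 2) * exp (-(((n / 2 : ℕ) - k) * (n - (n / 2 : ℕ) - k)) / n) := by
  obtain ⟨d, hd⟩ := Nat.exists_eq_add_of_le hk
  induction d generalizing k with
  | zero => simp [hd]
  | succ d ih =>
    have hstep := choose_le_choose_succ_mul_exp (n := n) (k := k) (by omega)
    have hrec := ih (k := k + 1) (by omega) (by omega)
    have hdR : ((n / 2 : ℕ) : ℝ) = k + d + 1 := by exact_mod_cast hd.trans (by ring)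
    refine hstep.trans ((mul_le_mul_of_nonneg_right hrec (exp_pos _).le).trans_eq ?_)
    rw [mul_assoc, ← exp_add, hdR]
    congr 2
    field_simp
    push_cast
    ring

theorem choose_le_choose_half_mul_exp {n k : ℕ} (hk : k ≤ n) :
    (n.choose k : ℝ) ≤ n.choose (n / 2) * exp (-(((n : ℝ) - 2 * k) ^ 2 - 1) / (4 * n)) := by
  wlog hkm : k ≤ n / 2 generalizing k
  · have h := this (Nat.sub_le n k) (by omega)
    rwa [Nat.choose_symm hk, Nat.cast_sub hk, show (n : ℝ) - 2 * (n - k) = -(n - 2 * k) by ring,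
      neg_sq] at h
  refine (choose_le_choose_half_mul_exp_of_le hkm).trans
    (mul_le_mul_of_nonneg_left (exp_le_exp.2 ?_) (by positivity))
  have hmod : 2 * ((n / 2 : ℕ) : ℝ) + (n % 2 : ℕ) = n := by exact_mod_cast Nat.div_add_mod n 2
  have hr : ((n % 2 : ℕ) : ℝ) ≤ 1 := by exact_mod_cast Nat.le_of_lt_succ (Nat.mod_lt n two_pos)
  rw [neg_div, neg_div, neg_le_neg_iff, ← div_div]
  refine div_le_div_of_nonneg_right ?_ (Nat.cast_nonneg (α := ℝ) n)
  rw [div_le_iff₀ four_pos]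
  nlinarith [Nat.cast_nonneg (α := ℝ) (n % 2)]

theorem sum_mul_le_mul_sum_add_card_mul {ι : Type*} {s : Finset ι} (p : ι → Prop)
    [DecidablePred p] {w E : ι → ℝ} {ε η : ℝ} (hε : 0 ≤ ε) (hη : 0 ≤ η)
    (hw : ∀ i ∈ s, 0 ≤ w i) (hin : ∀ i ∈ s, p i → E i ≤ ε)
    (hout : ∀ i ∈ s, ¬p i → w i * E i ≤ η) :
    ∑ i ∈ s, w i * E i ≤ ε * ∑ i ∈ s, w i + s.card * η := by
  have hterm : ∀ i ∈ s, w i * E i ≤ ε * w i + η := fun i hi => by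
    by_cases hp : p i
    · nlinarith [hw i hi, hin i hi hp]
    · nlinarith [hw i hi, hout i hi hp]
  calc ∑ i ∈ s, w i * E i ≤ ∑ i ∈ s, (ε * w i + η) := sum_le_sum hterm
    _ = _ := by rw [sum_add_distrib, ← mul_sum, sum_const, nsmul_eq_mul]

theorem abs_franelQ_sub_pi_sq_le_of_abs_sub_le {n k : ℕ} {δ : ℝ} (hk : k ≤ n) (hn : 0 < n)
    (hδn : 4 * δ ≤ n) (hkδ : |(n : ℝ) - 2 * k| ≤ 2 * δ) :
    |franelQ k (n - k) - π ^ 2| ≤ 576 * δ ^ 2 / n ^ 2 + 48 / n := by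
  have hnR : (0 : ℝ) < n := Nat.cast_pos.2 hn
  obtain ⟨hlo, hhi⟩ := abs_le.mp hkδ
  have hmin : (n : ℝ) / 4 ≤ ((min k (n - k) : ℕ) : ℝ) + 1 := by
    rw [Nat.cast_min, Nat.cast_sub hk]
    exact le_add_of_le_of_nonneg (le_min (by linarith) (by linarith)) zero_le_one
  have hdiff : |(k : ℝ) - ((n - k : ℕ) : ℝ)| ≤ 2 * δ := by
    rwa [Nat.cast_sub hk, abs_sub_comm, show (n : ℝ) - k - k = n - 2 * k by ring]
  have hδ : 0 ≤ δ := by linarith [abs_nonneg ((n : ℝ) - 2 * k)]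
  refine (abs_franelQ_sub_pi_sq_le k (n - k)).trans ?_
  have hfrac : |(k : ℝ) - ((n - k : ℕ) : ℝ)| / (((min k (n - k) : ℕ) : ℝ) + 1) ≤ 8 * δ / n :=
    calc _ ≤ 2 * δ / (n / 4) := div_le_div₀ (by positivity) hdiff (by positivity) hmin
      _ = 8 * δ / n := by field_simp; ring
  have h12 : 12 / (((min k (n - k) : ℕ) : ℝ) + 1) ≤ 48 / n :=
    calc _ ≤ 12 / ((n : ℝ) / 4) := div_le_div_of_nonneg_left (by norm_num) (by positivity) hmin
      _ = 48 / n := by field_simp; ring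
  calc _ ≤ 9 * (8 * δ / n) ^ 2 + 48 / n := by gcongr
    _ = _ := by ring

theorem abs_franelQ_sub_pi_sq_le_sq {n k : ℕ} (hk : k ≤ n) :
    |franelQ k (n - k) - π ^ 2| ≤ 9 * n ^ 2 + 12 := by
  have hmin : (1 : ℝ) ≤ ((min k (n - k) : ℕ) : ℝ) + 1 := by simp
  have hdiff : |(k : ℝ) - ((n - k : ℕ) : ℝ)| ≤ n := by
    rw [Nat.cast_sub hk, abs_le]
    constructor <;> linarith [(Nat.cast_le (α := ℝ)).2 hk, Nat.cast_nonneg (α := ℝ) k]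
  refine (abs_franelQ_sub_pi_sq_le k (n - k)).trans ?_
  have hfrac : |(k : ℝ) - ((n - k : ℕ) : ℝ)| / (((min k (n - k) : ℕ) : ℝ) + 1) ≤ n :=
    (div_le_self (abs_nonneg _) hmin).trans hdiff
  have h12 : 12 / (((min k (n - k) : ℕ) : ℝ) + 1) ≤ 12 := div_le_self (by norm_num) hmin
  gcongr

theorem choose_pow_three_le_of_lt_abs_sub {n k : ℕ} {δ : ℝ} (hk : k ≤ n) (hδ : 0 ≤ δ)
    (hkδ : 2 * δ < |(n : ℝ) - 2 * k|) :
    (n.choose k : ℝ) ^ 3 ≤ (n.choose (n / 2) : ℝ) ^ 3 * exp (-(4 * δ ^ 2 - 1) / (4 * n)) := by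
  have hsq : 4 * δ ^ 2 ≤ ((n : ℝ) - 2 * k) ^ 2 := by
    rw [← sq_abs ((n : ℝ) - 2 * k)]
    nlinarith
  have hexp : (n.choose k : ℝ) ≤ n.choose (n / 2) * exp (-(4 * δ ^ 2 - 1) / (4 * n)) := by
    refine (choose_le_choose_half_mul_exp hk).trans (by gcongr)
  have hmid : (n.choose k : ℝ) ≤ n.choose (n / 2) := by exact_mod_cast Nat.choose_le_middle k n
  calc (n.choose k : ℝ) ^ 3 = n.choose k * (n.choose k) ^ 2 := by ring
    _ ≤ n.choose (n / 2) * exp (-(4 * δ ^ 2 - 1) / (4 * n)) * (n.choose (n / 2)) ^ 2 := by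
      gcongr
    _ = _ := by ring

noncomputable def franel (n : ℕ) : ℝ := ∑ k ∈ range (n + 1), (n.choose k : ℝ) ^ 3

theorem choose_half_pow_three_le_franel (n : ℕ) : (n.choose (n / 2) : ℝ) ^ 3 ≤ franel n :=
  single_le_sum (f := fun k => (n.choose k : ℝ) ^ 3) (fun k _ => by positivity)
    (mem_range.2 (by omega))

theorem franel_pos (n : ℕ) : 0 < franel n := by
  have := Nat.choose_pos (Nat.div_le_self n 2)
  exact (by positivity : (0 : ℝ) < (n.choose (n / 2) : ℝ) ^ 3).trans_le
    (choose_half_pow_three_le_franel n)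

theorem abs_sum_div_franel_sub_le (n : ℕ) (f : ℕ → ℝ) (L : ℝ) :
    |(∑ k ∈ range (n + 1), (n.choose k : ℝ) ^ 3 * f k) / franel n - L| ≤
      (∑ k ∈ range (n + 1), (n.choose k : ℝ) ^ 3 * |f k - L|) / franel n := by
  have hS := franel_pos n
  have hdiff : (∑ k ∈ range (n + 1), (n.choose k : ℝ) ^ 3 * f k) / franel n - L =
      (∑ k ∈ range (n + 1), (n.choose k : ℝ) ^ 3 * (f k - L)) / franel n := by
    simp only [mul_sub, sum_sub_distrib, ← sum_mul, sub_div, franel] at hS ⊢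
    rw [mul_div_cancel_left₀ _ hS.ne']
  rw [hdiff, abs_div, abs_of_pos hS]
  gcongr
  refine (abs_sum_le_sum_abs _ _).trans_eq (sum_congr rfl fun k _ => ?_)
  rw [abs_mul, abs_of_nonneg (by positivity)]

theorem abs_sum_franelQ_div_franel_sub_le {n : ℕ} {δ : ℝ} (hn : 0 < n) (hδ : 0 ≤ δ)
    (hδn : 4 * δ ≤ n) :
    |(∑ k ∈ range (n + 1), (n.choose k : ℝ) ^ 3 * franelQ k (n - k)) / franel n - π ^ 2| ≤
      576 * δ ^ 2 / n ^ 2 + 48 / n +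
        (n + 1) * (9 * n ^ 2 + 12) * exp (-(4 * δ ^ 2 - 1) / (4 * n)) := by
  set ε : ℝ := 576 * δ ^ 2 / n ^ 2 + 48 / n
  set e : ℝ := exp (-(4 * δ ^ 2 - 1) / (4 * n))
  set c : ℝ := (n.choose (n / 2) : ℝ) ^ 3
  have hcS : c ≤ franel n := choose_half_pow_three_le_franel n
  have hS := franel_pos n
  have hsplit := sum_mul_le_mul_sum_add_card_mul (s := range (n + 1))
    (fun k => |(n : ℝ) - 2 * k| ≤ 2 * δ) (w := fun k => (n.choose k : ℝ) ^ 3)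
    (E := fun k => |franelQ k (n - k) - π ^ 2|) (ε := ε) (η := c * e * (9 * n ^ 2 + 12))
    (by positivity) (by positivity) (fun k _ => by positivity)
    (fun k hk hkδ => abs_franelQ_sub_pi_sq_le_of_abs_sub_le (by simpa [Nat.lt_succ_iff] using hk)
      hn hδn hkδ)
    (fun k hk hkδ => by
      have hk : k ≤ n := by simpa [Nat.lt_succ_iff] using hk
      exact mul_le_mul (choose_pow_three_le_of_lt_abs_sub hk hδ (not_le.1 hkδ))
        (abs_franelQ_sub_pi_sq_le_sq hk) (abs_nonneg _) (by positivity))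
  rw [card_range, Nat.cast_add_one] at hsplit
  refine (abs_sum_div_franel_sub_le n _ _).trans ?_
  calc _ ≤ (ε * franel n + (n + 1) * (c * e * (9 * n ^ 2 + 12))) / franel n := by
        gcongr
        exact hsplit
    _ = ε + (n + 1) * (9 * n ^ 2 + 12) * e * (c / franel n) := by field_simp
    _ ≤ ε + (n + 1) * (9 * n ^ 2 + 12) * e :=
      add_le_add_right (mul_le_of_le_one_right (by positivity) ((div_le_one hS).2 hcS)) ε

-- The bound of `abs_sum_franelQ_div_franel_sub_le` at `n = x²`, `δ = x^{3/2}`.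
theorem tendsto_franel_error_bound :
    Tendsto (fun x : ℝ => 576 * x ^ 3 / (x ^ 2) ^ 2 + 48 / x ^ 2 +
      (x ^ 2 + 1) * (9 * (x ^ 2) ^ 2 + 12) * exp (-(4 * x ^ 3 - 1) / (4 * x ^ 2)))
      atTop (𝓝 0) := by
  have hlim : Tendsto (fun x : ℝ => 624 / x + 126 * (x ^ 6 * exp (-x))) atTop (𝓝 0) := by
    simpa using (tendsto_const_nhds.div_atTop tendsto_id).add
      ((tendsto_pow_mul_exp_neg_atTop_nhds_zero 6).const_mul 126)
  refine squeeze_zero' ?_ ?_ hlim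
  · filter_upwards [eventually_gt_atTop 0] with x hx
    positivity
  · filter_upwards [eventually_ge_atTop 1] with x hx
    have hx0 : 0 < x := by linarith
    have hexp : exp (-(4 * x ^ 3 - 1) / (4 * x ^ 2)) ≤ 3 * exp (-x) := by
      calc exp (-(4 * x ^ 3 - 1) / (4 * x ^ 2)) ≤ exp (1 + -x) := by
            gcongr
            rw [div_le_iff₀ (by positivity)]
            nlinarith
        _ ≤ 3 * exp (-x) := by
          rw [exp_add]
          gcongr
          exact (exp_one_lt_d9.trans (by norm_num)).le
    have h1 : 576 * x ^ 3 / (x ^ 2) ^ 2 + 48 / x ^ 2 ≤ 624 / x := by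
      rw [div_add_div _ _ (by positivity) (by positivity), div_le_div_iff₀ (by positivity) hx0]
      nlinarith [pow_pos hx0 5, pow_pos hx0 6, pow_pos hx0 7]
    have h2 : (x ^ 2 + 1) * (9 * (x ^ 2) ^ 2 + 12) ≤ 42 * x ^ 6 := by
      nlinarith [pow_le_pow_right₀ hx (by norm_num : 2 ≤ 6),
        pow_le_pow_right₀ hx (by norm_num : 4 ≤ 6)]
    calc _ ≤ 624 / x + 42 * x ^ 6 * (3 * exp (-x)) := by gcongr
      _ = _ := by ring

theorem tendsto_sum_franelQ_div_franel :
    Tendsto (fun n : ℕ => (∑ k ∈ range (n + 1), (n.choose k : ℝ) ^ 3 * franelQ k (n - k)) /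
      franel n) atTop (𝓝 (π ^ 2)) := by
  rw [tendsto_iff_norm_sub_tendsto_zero]
  refine squeeze_zero' (.of_forall fun n => norm_nonneg _) ?_
    (tendsto_franel_error_bound.comp (tendsto_sqrt_atTop.comp tendsto_natCast_atTop_atTop))
  filter_upwards [eventually_ge_atTop 256] with n hn
  set x := √(n : ℝ) with hx
  have hnx : (n : ℝ) = x ^ 2 := (sq_sqrt n.cast_nonneg).symm
  have hx16 : 16 ≤ x := by
    rw [hx, le_sqrt (by norm_num) n.cast_nonneg]
    exact_mod_cast hn
  have hsx := sq_sqrt (by linarith : (0 : ℝ) ≤ x)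
  have hδn : 4 * (x * √x) ≤ n := by
    rw [hnx]
    nlinarith [sqrt_nonneg x]
  have h := abs_sum_franelQ_div_franel_sub_le (by omega) (by positivity) hδn
  rw [mul_pow, hsx, ← pow_succ, hnx] at h
  simpa only [Function.comp_apply, Real.norm_eq_abs, ← hx] using h

theorem franel_apery_limit :
    Tendsto (fun n : ℕ =>
        franelB n / ∑ k ∈ Finset.range (n + 1), (n.choose k : ℝ) ^ 3)
      atTop (nhds (π ^ 2 / 24)) := by
  refine (tendsto_sum_franelQ_div_franel.div_const 24).congr fun n => ?_
  rw [franelB, (hasSecondDerivAt_franelA3 n).iteratedDeriv_two_eq, franel]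
  ring
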